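/- Completeness of credential verification: let G be a commutative group, g an element of G of order q with q prime, h an element of G, M a type of messages, and H : G × G × G × G × M → ZMod q an arbitrary function (the hash H₂). Let x, r, δ, σ₁, σ₂ be integers, y = g^{x}, and let ζ₁, z be elements of G and m : M. Define ε = H(ζ₁, g^{r}, g^{σ₁}·ζ₁^{δ}, h^{σ₂}·(z·ζ₁⁻¹)^{δ}, m) ∈ ZMod q, let ω̄ be an integer whose residue modulo q equals ε − (δ mod q), and let ρ be an integer with ρ ≡ r − ω̄·x (mod q). Then the verification equation holds: (ω̄ + δ) mod q = H(ζ₁, g^{ρ}·y^{ω̄}, g^{σ₁}·ζ₁^{δ}, h^{σ₂}·(z·ζ₁⁻¹)^{δ}, m); i.e., an honestly issued credential (Σ, m) with Σ = (ζ₁, ρ, ω̄, σ₁, σ₂, δ, m) is accepted by Verify. -/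
import Mathlib

/-- Completeness of credential verification: an honestly issued credential
`Σ = (ζ₁, ρ, ωbar, σ₁, σ₂, δ)` on message `m`, produced by simulating the z-side
with `δ, σ₁, σ₂` and answering the y-side genuinely (commitment `g ^ r`,
challenge `ε` given by the hash `H`, challenge split `ωbar = ε - δ`, response
`ρ = r - ωbar * x mod q`), satisfies the verification equation
`ωbar + δ = H(ζ₁ | g^ρ y^ωbar | g^σ₁ ζ₁^δ | h^σ₂ (z ζ₁⁻¹)^δ | m)` modulo `q`. -/
theorem credential_verification_complete {G : Type*} [CommGroup G]
    (g h : G) (q : ℕ) (hq : q.Prime) (hord : orderOf g = q)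
    {M : Type*} (H : G × G × G × G × M → ZMod q)
    (x r δ σ₁ σ₂ : ℤ) (y : G) (hy : y = g ^ x)
    (ζ₁ z : G) (m : M)
    (ε : ZMod q)
    (hε : ε = H (ζ₁, g ^ r, g ^ σ₁ * ζ₁ ^ δ, h ^ σ₂ * (z * ζ₁⁻¹) ^ δ, m))
    (ωbar : ℤ) (hω : (ωbar : ZMod q) = ε - (δ : ZMod q))
    (ρ : ℤ) (hρ : ρ ≡ r - ωbar * x [ZMOD (q : ℤ)]) :
    ((ωbar + δ : ℤ) : ZMod q)
      = H (ζ₁, g ^ ρ * y ^ ωbar, g ^ σ₁ * ζ₁ ^ δ, h ^ σ₂ * (z * ζ₁⁻¹) ^ δ, m) := by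
  have hg : g ^ ρ * y ^ ωbar = g ^ r := by
    rw [hy, ← zpow_mul, ← zpow_add]
    have : ρ + x * ωbar ≡ r [ZMOD (q : ℤ)] := by
      calc ρ + x * ωbar ≡ (r - ωbar * x) + x * ωbar [ZMOD (q : ℤ)] :=
            Int.ModEq.add_right _ hρ
        _ = r := by ring
    have hdvd : (q : ℤ) ∣ (ρ + x * ωbar - r) := Int.ModEq.dvd this.symm
    obtain ⟨k, hk⟩ := hdvd
    have : ρ + x * ωbar = r + (q : ℤ) * k := by linarith
    rw [this, zpow_add, zpow_mul]
    have : g ^ (q : ℤ) = 1 := by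
      rw [zpow_natCast, ← hord, pow_orderOf_eq_one]
    rw [this, one_zpow, mul_one]
  rw [hg, ← hε]
  push_cast
  rw [hω]
  ring
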